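/- For any rooted binary tree T on n vertices with root r, the number of subtrees of T containing r satisfies f_T(r) ≥ 3·2^{(n−1)/2} − 2, with equality if and only if T is isomorphic to the rooted binary tree with exactly two vertices at every positive level. -/

import Mathlib

open SimpleGraph Finset

/-- `G` is a rooted binary tree with root `r`: a tree in which the root has degree 2
(or the tree is a single vertex) and every non-root vertex has degree 1 or 3. -/
def IsRootedBinaryTree {V : Type*} [Fintype V] (G : SimpleGraph V) [DecidableRel G.Adj]
    (r : V) : Prop :=
  G.IsTree ∧ (Fintype.card V = 1 ∨ G.degree r = 2) ∧
    ∀ v : V, v ≠ r → G.degree v = 1 ∨ G.degree v = 3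

/-- The height of a rooted tree: the maximum distance from the root to a vertex. -/
noncomputable def treeHeight {V : Type*} [Fintype V] (G : SimpleGraph V) (r : V) : ℕ :=
  Finset.univ.sup (fun v => G.dist r v)

/-- Number of subtrees of `G` containing `x`. -/
noncomputable def numSubtrees {V : Type*} (G : SimpleGraph V) (x : V) : ℕ :=
  {S : Finset V | x ∈ S ∧ (G.induce (S : Set V)).Connected}.ncard

/-!
Root the tree at `r`. In a tree, a vertex set containing `x` induces a connected subgraph iff it
contains every vertex lying on a geodesic from `x` to one of its members. Hence the subtrees
containing `v` inside the subtree hanging from `v` split along the two children `a, b` of `v`: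
`f(v) = (f(a) + 1) (f(b) + 1)`. If the subtree hanging from `v` has `2k + 1` vertices, induction
gives `f(v) + 2 ≥ 3 · 2^k`, since `(3 · 2^p - 1)(3 · 2^q - 1) + 2 - 3 · 2^(p+q+1)
= 3 (2^p - 1)(2^q - 1)`. Equality therefore propagates exactly when one child is a leaf and the
other subtree is extremal, which is the condition that every level has two vertices.
-/

namespace SimpleGraph

variable {V : Type*} {G : SimpleGraph V} {u v w x y z : V}

def Btw (G : SimpleGraph V) (x y z : V) : Prop :=
  G.dist x y + G.dist y z = G.dist x z

lemma btw_self_left (x z : V) : G.Btw x x z := by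
  simp [Btw]

lemma btw_self_right (x z : V) : G.Btw x z z := by
  simp [Btw]

lemma Btw.symm (h : G.Btw x y z) : G.Btw z y x := by
  rw [Btw, G.dist_comm (u := z), G.dist_comm (u := y) (v := x), G.dist_comm (u := z) (v := x),
    add_comm]
  exact h

lemma Walk.btw_of_length_eq_dist {p : G.Walk u v} (hp : p.length = G.dist u v)
    (hw : w ∈ p.support) : G.Btw u w v := by
  classical
  have hsplit := congrArg Walk.length (p.take_spec hw)
  rw [Walk.length_append] at hsplit
  have := G.dist_le (p.takeUntil w hw)
  have := G.dist_le (p.dropUntil w hw)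
  have := (p.takeUntil w hw).reachable.dist_triangle_left v
  unfold Btw
  omega

protected lemma Connected.eq_of_btw_of_btw (hG : G.Connected) (h₁ : G.Btw x y z)
    (h₂ : G.Btw x z y) : y = z := by
  unfold Btw at h₁ h₂
  rw [G.dist_comm (u := z)] at h₂
  exact hG.dist_eq_zero_iff.mp (by omega)

protected lemma Connected.btw_trans_iff (hG : G.Connected) {a b c d : V} :
    G.Btw a b d ∧ G.Btw b c d ↔ G.Btw a b c ∧ G.Btw a c d := by
  have := hG.dist_triangle (u := a) (v := b) (w := c)
  have := hG.dist_triangle (u := a) (v := c) (w := d)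
  have := hG.dist_triangle (u := a) (v := b) (w := d)
  have := hG.dist_triangle (u := b) (v := c) (w := d)
  unfold Btw
  omega

protected lemma Connected.exists_adj_btw (hG : G.Connected) (h : x ≠ z) :
    ∃ c, G.Adj x c ∧ G.Btw x c z := by
  obtain ⟨p, hp⟩ := hG.exists_walk_length_eq_dist x z
  exact ⟨p.snd, p.adj_snd fun hnil => h hnil.eq,
    p.btw_of_length_eq_dist hp (p.getVert_mem_support 1)⟩

namespace IsTree

variable (hT : G.IsTree)
include hT

lemma length_eq_dist {p : G.Walk u v} (hp : p.IsPath) : p.length = G.dist u v := by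
  obtain ⟨q, hq, hql⟩ := hT.connected.exists_path_of_dist u v
  rw [← hql, Subtype.mk.inj ((hT.isAcyclic.subsingleton_path u v).elim ⟨p, hp⟩ ⟨q, hq⟩)]

lemma mem_support_iff_btw {p : G.Walk u v} (hp : p.IsPath) : w ∈ p.support ↔ G.Btw u w v := by
  refine ⟨Walk.btw_of_length_eq_dist (hT.length_eq_dist hp), fun h => ?_⟩
  obtain ⟨q₁, hq₁⟩ := hT.connected.exists_walk_length_eq_dist u w
  obtain ⟨q₂, hq₂⟩ := hT.connected.exists_walk_length_eq_dist w v
  have hq : (q₁.append q₂).IsPath :=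
    Walk.isPath_of_length_eq_dist _ (by rw [Walk.length_append, hq₁, hq₂]; exact h)
  rw [Subtype.mk.inj ((hT.isAcyclic.subsingleton_path u v).elim ⟨p, hp⟩ ⟨_, hq⟩),
    Walk.mem_support_append_iff]
  exact Or.inr q₂.start_mem_support

lemma mem_support_of_btw (p : G.Walk u v) (h : G.Btw u w v) : w ∈ p.support := by
  classical
  exact p.support_bypass_subset_support ((hT.mem_support_iff_btw p.bypass_isPath).mpr h)

lemma eq_of_adj_of_btw {c c' : V} (hc : G.Adj x c) (hc' : G.Adj x c') (h : G.Btw x c z)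
    (h' : G.Btw x c' z) : c = c' := by
  obtain ⟨p, hp, -⟩ := hT.connected.exists_path_of_dist x z
  rw [hT.isAcyclic.eq_snd_of_adj_start hp hc ((hT.mem_support_iff_btw hp).mpr h),
    hT.isAcyclic.eq_snd_of_adj_start hp hc' ((hT.mem_support_iff_btw hp).mpr h')]

lemma btw_or_btw_of_adj (r : V) (h : G.Adj v w) : G.Btw r v w ∨ G.Btw r w v := by
  obtain ⟨p, hp, -⟩ := hT.connected.exists_path_of_dist r v
  obtain ⟨q, hq, -⟩ := hT.connected.exists_path_of_dist r w
  by_cases hv : v ∈ q.support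
  · exact Or.inl ((hT.mem_support_iff_btw hq).mp hv)
  · exact Or.inr ((hT.mem_support_iff_btw hp).mp
      (hT.isAcyclic.mem_support_of_ne_mem_support_of_adj_of_isPath hp hq h hv))

end IsTree

/-- For `x ∈ S` in a tree, this says that `S` induces a connected subgraph
(`IsTree.connected_induce_iff`). -/
def IsStarShaped (G : SimpleGraph V) (x : V) (S : Finset V) : Prop :=
  ∀ w ∈ S, ∀ u, G.Btw x u w → u ∈ S

lemma IsTree.connected_induce_iff (hT : G.IsTree) {S : Finset V} (hx : x ∈ S) :
    (G.induce (S : Set V)).Connected ↔ G.IsStarShaped x S := by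
  constructor
  · intro hS w hw u hu
    obtain ⟨p⟩ := hS.preconnected ⟨x, hx⟩ ⟨w, hw⟩
    have hu' := hT.mem_support_of_btw (p.map (Embedding.induce (S : Set V)).toHom) hu
    rw [Walk.support_map, List.mem_map] at hu'
    obtain ⟨⟨u', hu'S⟩, -, rfl⟩ := hu'
    exact hu'S
  · intro hS
    rw [connected_iff_exists_forall_reachable]
    refine ⟨⟨x, hx⟩, fun ⟨w, hw⟩ => ?_⟩
    obtain ⟨p, hp⟩ := hT.connected.exists_walk_length_eq_dist x w
    exact (p.induce (S : Set V)
      fun u hu => hS w hw u (p.btw_of_length_eq_dist hp hu)).reachable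

variable [Fintype V] (G) (r : V)

open scoped Classical in
noncomputable def descendants (v : V) : Finset V := {w | G.Btw r v w}

open scoped Classical in
noncomputable def children (v : V) : Finset V := {c ∈ G.descendants r v | G.Adj v c}

noncomputable def level (v : V) (l : ℕ) : Finset V := {w ∈ G.descendants r v | G.dist v w = l}

noncomputable def subtreeHeight (v : V) : ℕ := (G.descendants r v).sup (G.dist v)

def HasTwoPerLevel (v : V) : Prop :=
  ∀ l, 1 ≤ l → l ≤ G.subtreeHeight r v → #(G.level r v l) = 2

open scoped Classical in
noncomputable def rootedSubtrees (v : V) : Finset (Finset V) :=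
  {S ∈ (G.descendants r v).powerset | v ∈ S ∧ G.IsStarShaped v S}

variable {G r}

@[simp]
lemma mem_descendants : w ∈ G.descendants r v ↔ G.Btw r v w := by
  simp [descendants]

@[simp]
lemma mem_children : w ∈ G.children r v ↔ G.Btw r v w ∧ G.Adj v w := by
  simp [children]

lemma self_mem_descendants (v : V) : v ∈ G.descendants r v := by
  simp [btw_self_right]

lemma descendants_self : G.descendants r r = univ := by
  ext; simp [btw_self_left]

section Connected

variable (hG : G.Connected)
include hG

lemma Connected.btw_of_mem_descendants_of_mem_children {c : V} (hc : c ∈ G.children r v)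
    (hw : w ∈ G.descendants r c) : G.Btw r v w ∧ G.Btw v c w :=
  hG.btw_trans_iff.mpr ⟨(mem_children.mp hc).1, mem_descendants.mp hw⟩

lemma Connected.descendants_subset_of_mem_children {c : V} (hc : c ∈ G.children r v) :
    G.descendants r c ⊆ G.descendants r v := fun _ hw =>
  mem_descendants.mpr (hG.btw_of_mem_descendants_of_mem_children hc hw).1

lemma Connected.notMem_descendants_of_mem_children {c : V} (hc : c ∈ G.children r v) :
    v ∉ G.descendants r c := fun hv =>
  (mem_children.mp hc).2.ne (hG.eq_of_btw_of_btw (mem_children.mp hc).1 (mem_descendants.mp hv))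

lemma Connected.exists_mem_children_of_mem_descendants (hw : w ∈ G.descendants r v)
    (hwv : w ≠ v) : ∃ c ∈ G.children r v, w ∈ G.descendants r c := by
  obtain ⟨c, hvc, hcw⟩ := hG.exists_adj_btw hwv.symm
  have h := hG.btw_trans_iff.mp ⟨mem_descendants.mp hw, hcw⟩
  exact ⟨c, mem_children.mpr ⟨h.1, hvc⟩, mem_descendants.mpr h.2⟩

lemma Connected.descendants_eq_singleton (h : G.children r v = ∅) :
    G.descendants r v = {v} := by
  refine eq_singleton_iff_unique_mem.mpr ⟨self_mem_descendants v, fun w hw => ?_⟩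
  by_contra hwv
  obtain ⟨c, hc, -⟩ := hG.exists_mem_children_of_mem_descendants hw hwv
  simp [h] at hc

lemma Connected.descendants_eq_insert_union [DecidableEq V] {a b : V}
    (h : G.children r v = {a, b}) :
    G.descendants r v = insert v (G.descendants r a ∪ G.descendants r b) := by
  have ha : a ∈ G.children r v := by simp [h]
  have hb : b ∈ G.children r v := by simp [h]
  ext w
  constructor
  · intro hw
    by_cases hwv : w = v
    · simp [hwv]
    obtain ⟨c, hc, hwc⟩ := hG.exists_mem_children_of_mem_descendants hw hwv
    rw [h, mem_insert, mem_singleton] at hc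
    rcases hc with rfl | rfl <;> simp [hwc]
  · simp only [mem_insert, mem_union]
    rintro (rfl | hw | hw)
    · exact self_mem_descendants w
    · exact hG.descendants_subset_of_mem_children ha hw
    · exact hG.descendants_subset_of_mem_children hb hw

lemma Connected.rootedSubtrees_eq_singleton (h : G.children r v = ∅) :
    G.rootedSubtrees r v = {{v}} := by
  ext S
  simp only [rootedSubtrees, hG.descendants_eq_singleton h, mem_filter, mem_powerset,
    mem_singleton]
  constructor
  · rintro ⟨hS, hv, -⟩
    exact subset_singleton_iff.mp hS |>.resolve_left (ne_empty_of_mem hv)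
  · rintro rfl
    refine ⟨subset_refl _, mem_singleton_self v, fun w hw u hu => ?_⟩
    rw [mem_singleton] at hw ⊢
    subst hw
    exact hG.eq_of_btw_of_btw hu (btw_self_left _ _)

end Connected

namespace IsTree

variable (hT : G.IsTree)
include hT

lemma disjoint_descendants {c c' : V} (hc : c ∈ G.children r v) (hc' : c' ∈ G.children r v)
    (hcc' : c ≠ c') : Disjoint (G.descendants r c) (G.descendants r c') := by
  refine Finset.disjoint_left.mpr fun w hw hw' => hcc' ?_
  exact hT.eq_of_adj_of_btw (mem_children.mp hc).2 (mem_children.mp hc').2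
    (hT.connected.btw_of_mem_descendants_of_mem_children hc hw).2
    (hT.connected.btw_of_mem_descendants_of_mem_children hc' hw').2

lemma card_descendants [DecidableEq V] {a b : V} (h : G.children r v = {a, b}) (hab : a ≠ b) :
    #(G.descendants r v) = #(G.descendants r a) + #(G.descendants r b) + 1 := by
  have ha : a ∈ G.children r v := by simp [h]
  have hb : b ∈ G.children r v := by simp [h]
  rw [hT.connected.descendants_eq_insert_union h, card_insert_of_notMem,
    card_union_of_disjoint (hT.disjoint_descendants ha hb hab)]
  simp [hT.connected.notMem_descendants_of_mem_children ha,
    hT.connected.notMem_descendants_of_mem_children hb]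

lemma btw_of_mem_children {c : V} (hc : c ∈ G.children r v) (hw : w ∈ G.descendants r c)
    (hu : G.Btw v u w) (huv : u ≠ v) : G.Btw c u w := by
  obtain ⟨c', hvc', hc'u⟩ := hT.connected.exists_adj_btw huv.symm
  have h := hT.connected.btw_trans_iff.mpr ⟨hc'u, hu⟩
  rw [hT.eq_of_adj_of_btw hvc' (mem_children.mp hc).2 h.1
    (hT.connected.btw_of_mem_descendants_of_mem_children hc hw).2] at h
  exact h.2

end IsTree

lemma IsStarShaped.inter_descendants [DecidableEq V] (hG : G.Connected) {S : Finset V} {c : V}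
    (hS : G.IsStarShaped v S) (hc : c ∈ G.children r v) :
    G.IsStarShaped c (S ∩ G.descendants r c) := by
  intro w hw u hu
  rw [mem_inter] at hw ⊢
  have hvw := (hG.btw_of_mem_descendants_of_mem_children hc hw.2).2
  have hcu := hG.btw_trans_iff.mp ⟨mem_descendants.mp hw.2, hu⟩
  exact ⟨hS w hw.1 u (hG.btw_trans_iff.mp ⟨hvw, hu⟩).2, mem_descendants.mpr hcu.1⟩

lemma IsStarShaped.mem_of_mem_children (hT : G.IsTree) {S : Finset V} {c : V}
    (hS : G.IsStarShaped c S) (hc : c ∈ G.children r v) (hSc : S ⊆ G.descendants r c)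
    (hw : w ∈ S) (hu : G.Btw v u w) (huv : u ≠ v) : u ∈ S :=
  hS w hw u (hT.btw_of_mem_children hc (hSc hw) hu huv)

lemma mem_rootedSubtrees {S : Finset V} :
    S ∈ G.rootedSubtrees r v ↔ S ⊆ G.descendants r v ∧ v ∈ S ∧ G.IsStarShaped v S := by
  simp [rootedSubtrees]

open scoped Classical in
lemma card_filter_isStarShaped (v : V) :
    #{S ∈ (G.descendants r v).powerset | G.IsStarShaped v S} = #(G.rootedSubtrees r v) + 1 := by
  have h : {S ∈ (G.descendants r v).powerset | G.IsStarShaped v S} =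
      insert ∅ (G.rootedSubtrees r v) := by
    ext S
    simp only [mem_filter, mem_powerset, mem_insert, mem_rootedSubtrees]
    constructor
    · rintro ⟨hS, hS'⟩
      rcases S.eq_empty_or_nonempty with rfl | ⟨w, hw⟩
      · exact Or.inl rfl
      · exact Or.inr ⟨hS, hS' w hw v (btw_self_left v w), hS'⟩
    · rintro (rfl | ⟨hS, -, hS'⟩)
      · exact ⟨empty_subset _, fun w hw => absurd hw (notMem_empty w)⟩
      · exact ⟨hS, hS'⟩
  rw [h, card_insert_of_notMem fun h => notMem_empty v (mem_rootedSubtrees.mp h).2.1]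

lemma IsTree.card_rootedSubtrees [DecidableEq V] (hT : G.IsTree) {a b : V}
    (h : G.children r v = {a, b}) (hab : a ≠ b) :
    #(G.rootedSubtrees r v) = (#(G.rootedSubtrees r a) + 1) * (#(G.rootedSubtrees r b) + 1) := by
  have ha : a ∈ G.children r v := by simp [h]
  have hb : b ∈ G.children r v := by simp [h]
  have hG := hT.connected
  -- a subtree through `v` is `v` plus a possibly empty star-shaped set below each child
  rw [← card_filter_isStarShaped, ← card_filter_isStarShaped, ← card_product]
  refine card_nbij' (fun S => (S ∩ G.descendants r a, S ∩ G.descendants r b))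
    (fun p => insert v (p.1 ∪ p.2)) ?_ ?_ ?_ ?_
  · intro S hS
    obtain ⟨-, -, hS⟩ := mem_rootedSubtrees.mp hS
    simp only [coe_product, Set.mem_prod, mem_coe, mem_filter, mem_powerset]
    exact ⟨⟨inter_subset_right, hS.inter_descendants hG ha⟩,
      ⟨inter_subset_right, hS.inter_descendants hG hb⟩⟩
  · rintro ⟨A, B⟩ hAB
    simp only [coe_product, Set.mem_prod, mem_coe, mem_filter, mem_powerset] at hAB
    obtain ⟨⟨hA, hA'⟩, hB, hB'⟩ := hAB
    refine mem_rootedSubtrees.mpr ⟨?_, mem_insert_self _ _, fun w hw u hu => ?_⟩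
    · rw [hG.descendants_eq_insert_union h]
      exact insert_subset_insert _ (union_subset_union hA hB)
    by_cases huv : u = v
    · exact huv ▸ mem_insert_self _ _
    refine mem_insert_of_mem (mem_union.mpr ?_)
    rcases mem_insert.mp hw with rfl | hw
    · exact absurd (hG.eq_of_btw_of_btw hu (btw_self_left _ _)) huv
    rcases mem_union.mp hw with hw | hw
    · exact Or.inl (hA'.mem_of_mem_children hT ha hA hw hu huv)
    · exact Or.inr (hB'.mem_of_mem_children hT hb hB hw hu huv)
  · intro S hS
    obtain ⟨hSv, hv, -⟩ := mem_rootedSubtrees.mp hS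
    dsimp only
    rw [← inter_union_distrib_left, ← inter_insert_of_mem hv,
      ← hG.descendants_eq_insert_union h, inter_eq_left.mpr hSv]
  · rintro ⟨A, B⟩ hAB
    simp only [coe_product, Set.mem_prod, mem_coe, mem_filter, mem_powerset] at hAB
    have hdisj := hT.disjoint_descendants ha hb hab
    simp only [insert_inter_of_notMem (hG.notMem_descendants_of_mem_children ha),
      insert_inter_of_notMem (hG.notMem_descendants_of_mem_children hb),
      union_inter_distrib_right, inter_eq_left.mpr hAB.1.1, inter_eq_left.mpr hAB.2.1,
      disjoint_iff_inter_eq_empty.mp (hdisj.symm.mono_left hAB.2.1),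
      disjoint_iff_inter_eq_empty.mp (hdisj.mono_left hAB.1.1),
      union_empty, empty_union]

section Levels

variable (hG : G.Connected)
include hG

lemma Connected.dist_eq_of_mem_children {c : V} (hc : c ∈ G.children r v)
    (hw : w ∈ G.descendants r c) : G.dist v w = G.dist c w + 1 := by
  have h := (hG.btw_of_mem_descendants_of_mem_children hc hw).2
  rw [Btw, dist_eq_one_iff_adj.mpr (mem_children.mp hc).2] at h
  omega

lemma Connected.level_zero (v : V) : G.level r v 0 = {v} := by
  ext w
  simp only [level, mem_filter, mem_descendants, hG.dist_eq_zero_iff, mem_singleton]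
  exact ⟨fun h => h.2.symm, fun h => ⟨h ▸ btw_self_right r w, h.symm⟩⟩

omit hG in
lemma level_one (v : V) : G.level r v 1 = G.children r v := by
  ext w
  simp [level, dist_eq_one_iff_adj]

omit hG in
lemma card_level_of_descendants_eq_singleton (h : G.descendants r v = {v}) (l : ℕ) :
    #(G.level r v l) = if l = 0 then 1 else 0 := by
  rw [level, h, filter_singleton, dist_self]
  split_ifs <;> simp_all

lemma Connected.level_succ [DecidableEq V] {a b : V} (h : G.children r v = {a, b}) (l : ℕ) :
    G.level r v (l + 1) = G.level r a l ∪ G.level r b l := by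
  have ha : a ∈ G.children r v := by simp [h]
  have hb : b ∈ G.children r v := by simp [h]
  rw [level, hG.descendants_eq_insert_union h, filter_insert, if_neg (by simp), filter_union]
  congr 1 <;> refine filter_congr fun w hw => ?_
  · rw [hG.dist_eq_of_mem_children ha hw, Nat.add_right_cancel_iff]
  · rw [hG.dist_eq_of_mem_children hb hw, Nat.add_right_cancel_iff]

lemma Connected.subtreeHeight_eq [DecidableEq V] {a b : V} (h : G.children r v = {a, b}) :
    G.subtreeHeight r v = max (G.subtreeHeight r a) (G.subtreeHeight r b) + 1 := by
  have key : ∀ c ∈ G.children r v,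
      (G.descendants r c).sup (G.dist v) = G.subtreeHeight r c + 1 := fun c hc => by
    rw [subtreeHeight, sup_congr rfl fun w hw => hG.dist_eq_of_mem_children hc hw,
      apply_sup_eq_sup_comp_of_nonempty (add_left_mono (a := 1)) ⟨c, self_mem_descendants c⟩]
    rfl
  rw [subtreeHeight, hG.descendants_eq_insert_union h, sup_insert, sup_union,
    key a (by simp [h]), key b (by simp [h]), dist_self]
  simp only [zero_le, sup_of_le_right, max_add_add_right]

lemma Connected.subtreeHeight_eq_zero_iff :
    G.subtreeHeight r v = 0 ↔ G.descendants r v = {v} := by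
  rw [subtreeHeight, ← bot_eq_zero', Finset.sup_eq_bot_iff]
  constructor
  · exact fun h => eq_singleton_iff_unique_mem.mpr
      ⟨self_mem_descendants v, fun w hw => (hG.dist_eq_zero_iff.mp (h w hw)).symm⟩
  · intro h w hw
    rw [h, mem_singleton] at hw
    simp [hw]

end Levels

lemma hasTwoPerLevel_of_descendants_eq_singleton (h : G.descendants r v = {v}) :
    G.HasTwoPerLevel r v := fun l hl hlh => by
  rw [subtreeHeight, h, sup_singleton, dist_self] at hlh
  omega

lemma IsTree.card_level_succ [DecidableEq V] (hT : G.IsTree) {a b : V}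
    (h : G.children r v = {a, b}) (hab : a ≠ b) (l : ℕ) :
    #(G.level r v (l + 1)) = #(G.level r a l) + #(G.level r b l) := by
  rw [hT.connected.level_succ h, card_union_of_disjoint]
  exact disjoint_filter_filter (hT.disjoint_descendants (v := v) (by simp [h]) (by simp [h]) hab)

lemma IsTree.hasTwoPerLevel_iff_of_descendants_eq_singleton [DecidableEq V] (hT : G.IsTree)
    {a b : V} (h : G.children r v = {a, b}) (hab : a ≠ b) (hb : G.descendants r b = {b}) :
    G.HasTwoPerLevel r v ↔ G.HasTwoPerLevel r a := by
  have hG := hT.connected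
  have hheight : G.subtreeHeight r v = G.subtreeHeight r a + 1 := by
    rw [hG.subtreeHeight_eq h, hG.subtreeHeight_eq_zero_iff.mpr hb, Nat.max_zero]
  have hlevel (l : ℕ) : #(G.level r v (l + 1)) = #(G.level r a l) + if l = 0 then 1 else 0 := by
    rw [hT.card_level_succ h hab, card_level_of_descendants_eq_singleton hb]
  constructor
  · intro H l hl hla
    have := H (l + 1) (by omega) (by omega)
    rwa [hlevel, if_neg (by omega), add_zero] at this
  · intro H l hl hlv
    obtain ⟨m, rfl⟩ : ∃ m, l = m + 1 := ⟨l - 1, by omega⟩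
    rw [hlevel]
    rcases Nat.eq_zero_or_pos m with rfl | hm
    · simp [hG.level_zero]
    · rw [H m hm (by omega), if_neg hm.ne']

lemma IsTree.descendants_eq_singleton_or_of_hasTwoPerLevel [DecidableEq V] (hT : G.IsTree)
    {a b : V} (h : G.children r v = {a, b}) (hab : a ≠ b)
    (hca : #(G.children r a) = 0 ∨ #(G.children r a) = 2)
    (hcb : #(G.children r b) = 0 ∨ #(G.children r b) = 2) (H : G.HasTwoPerLevel r v) :
    G.descendants r a = {a} ∨ G.descendants r b = {b} := by
  have hG := hT.connected
  by_contra! hne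
  have hca2 := hca.resolve_left fun h0 => hne.1 (hG.descendants_eq_singleton (card_eq_zero.mp h0))
  have hcb2 := hcb.resolve_left fun h0 => hne.2 (hG.descendants_eq_singleton (card_eq_zero.mp h0))
  have hheight : 1 + 1 ≤ G.subtreeHeight r v := by
    have := hG.subtreeHeight_eq_zero_iff.not.mpr hne.1
    rw [hG.subtreeHeight_eq h]
    omega
  have := H (1 + 1) (by omega) hheight
  rw [hT.card_level_succ h hab, level_one, level_one, hca2, hcb2] at this
  omega

lemma IsTree.hasTwoPerLevel_iff [DecidableEq V] (hT : G.IsTree) {a b : V}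
    (h : G.children r v = {a, b}) (hab : a ≠ b)
    (hca : #(G.children r a) = 0 ∨ #(G.children r a) = 2)
    (hcb : #(G.children r b) = 0 ∨ #(G.children r b) = 2) :
    G.HasTwoPerLevel r v ↔ G.HasTwoPerLevel r a ∧ G.HasTwoPerLevel r b ∧
      (G.descendants r a = {a} ∨ G.descendants r b = {b}) := by
  have h' : G.children r v = {b, a} := by rw [h, pair_comm]
  constructor
  · intro H
    rcases hT.descendants_eq_singleton_or_of_hasTwoPerLevel h hab hca hcb H with ha | hb
    · exact ⟨hasTwoPerLevel_of_descendants_eq_singleton ha,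
        (hT.hasTwoPerLevel_iff_of_descendants_eq_singleton h' hab.symm ha).mp H, Or.inl ha⟩
    · exact ⟨(hT.hasTwoPerLevel_iff_of_descendants_eq_singleton h hab hb).mp H,
        hasTwoPerLevel_of_descendants_eq_singleton hb, Or.inr hb⟩
  · rintro ⟨Ha, Hb, ha | hb⟩
    · exact (hT.hasTwoPerLevel_iff_of_descendants_eq_singleton h' hab.symm ha).mpr Hb
    · exact (hT.hasTwoPerLevel_iff_of_descendants_eq_singleton h hab hb).mpr Ha

lemma descendants_eq_singleton_iff_card_eq_one :
    G.descendants r v = {v} ↔ #(G.descendants r v) = 1 := by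
  refine ⟨fun h => by rw [h, card_singleton], fun h => ?_⟩
  obtain ⟨x, hx⟩ := card_eq_one.mp h
  have hv := self_mem_descendants (G := G) (r := r) v
  rw [hx, mem_singleton] at hv
  rw [hx, hv]

lemma three_mul_two_pow_le_succ_mul_succ_add_two {p q X Y : ℕ} (hX : 3 * 2 ^ p ≤ X + 2)
    (hY : 3 * 2 ^ q ≤ Y + 2) :
    3 * 2 ^ (p + q + 1) ≤ (X + 1) * (Y + 1) + 2 ∧
      ((X + 1) * (Y + 1) + 2 = 3 * 2 ^ (p + q + 1) ↔
        X + 2 = 3 * 2 ^ p ∧ Y + 2 = 3 * 2 ^ q ∧ (p = 0 ∨ q = 0)) := by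
  obtain ⟨P, hP⟩ : ∃ P, 2 ^ p = P + 1 := ⟨2 ^ p - 1, by have := p.one_le_two_pow; omega⟩
  obtain ⟨Q, hQ⟩ : ∃ Q, 2 ^ q = Q + 1 := ⟨2 ^ q - 1, by have := q.one_le_two_pow; omega⟩
  obtain ⟨s, rfl⟩ : ∃ s, X = 3 * P + 1 + s := ⟨X - (3 * P + 1), by omega⟩
  obtain ⟨t, rfl⟩ : ∃ t, Y = 3 * Q + 1 + t := ⟨Y - (3 * Q + 1), by omega⟩
  have hp : p = 0 ↔ P = 0 := by
    have h := Nat.pow_eq_one (a := 2) (n := p)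
    rw [hP] at h
    omega
  have hq : q = 0 ↔ Q = 0 := by
    have h := Nat.pow_eq_one (a := 2) (n := q)
    rw [hQ] at h
    omega
  have key : (3 * P + 1 + s + 1) * (3 * Q + 1 + t + 1) + 2 =
      3 * 2 ^ (p + q + 1) + (3 * (P * Q) + s * (3 * Q + 2) + t * (3 * P + 2) + s * t) := by
    rw [pow_succ, pow_add, hP, hQ]
    ring
  rw [key, hP, hQ, hp, hq, add_eq_left]
  simp only [Nat.add_eq_zero_iff, mul_eq_zero]
  omega

lemma IsTree.card_rootedSubtrees_bound (hT : G.IsTree)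
    (hc : ∀ v, #(G.children r v) = 0 ∨ #(G.children r v) = 2) (v : V) :
    ∃ k, #(G.descendants r v) = 2 * k + 1 ∧ 3 * 2 ^ k ≤ #(G.rootedSubtrees r v) + 2 ∧
      (#(G.rootedSubtrees r v) + 2 = 3 * 2 ^ k ↔ G.HasTwoPerLevel r v) := by
  classical
  induction hn : #(G.descendants r v) using Nat.strong_induction_on generalizing v with
  | _ n ih =>
  rcases hc v with h0 | h2
  · have hv := hT.connected.descendants_eq_singleton (card_eq_zero.mp h0)
    refine ⟨0, by rw [← hn, hv, card_singleton], ?_, ?_⟩ <;>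
      simp [hT.connected.rootedSubtrees_eq_singleton (card_eq_zero.mp h0),
        hasTwoPerLevel_of_descendants_eq_singleton hv]
  obtain ⟨a, b, hab, h⟩ := card_eq_two.mp h2
  have hcard := hT.card_descendants h hab
  obtain ⟨p, hpa, hpb, hpe⟩ := ih _ (by omega) a rfl
  obtain ⟨q, hqa, hqb, hqe⟩ := ih _ (by omega) b rfl
  obtain ⟨hle, heq⟩ := three_mul_two_pow_le_succ_mul_succ_add_two hpb hqb
  refine ⟨p + q + 1, by omega, hT.card_rootedSubtrees h hab ▸ hle, ?_⟩
  rw [hT.card_rootedSubtrees h hab, heq, hpe, hqe, hT.hasTwoPerLevel_iff h hab (hc a) (hc b),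
    descendants_eq_singleton_iff_card_eq_one, descendants_eq_singleton_iff_card_eq_one, hpa, hqa,
    show 2 * p + 1 = 1 ↔ p = 0 by omega, show 2 * q + 1 = 1 ↔ q = 0 by omega]

lemma IsTree.card_children_add_one [DecidableRel G.Adj] (hT : G.IsTree) (hv : v ≠ r) :
    #(G.children r v) + 1 = G.degree v := by
  classical
  obtain ⟨p, hvp, hpr⟩ := hT.connected.exists_adj_btw hv
  have hp : p ∉ G.children r v := fun hp =>
    hvp.ne (hT.connected.eq_of_btw_of_btw (mem_children.mp hp).1 hpr.symm)
  rw [← card_neighborFinset_eq_degree, ← card_insert_of_notMem hp]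
  congr 1
  ext c
  simp only [mem_insert, mem_children, mem_neighborFinset]
  constructor
  · rintro (rfl | ⟨-, hc⟩)
    · exact hvp
    · exact hc
  · intro hc
    rcases hT.btw_or_btw_of_adj r hc with h | h
    · exact Or.inr ⟨h, hc⟩
    · exact Or.inl (hT.eq_of_adj_of_btw hc hvp h.symm hpr)

lemma children_self [DecidableRel G.Adj] : G.children r r = G.neighborFinset r := by
  ext
  simp [btw_self_left]

lemma IsTree.numSubtrees_eq (hT : G.IsTree) : numSubtrees G r = #(G.rootedSubtrees r r) := by
  rw [numSubtrees, ← Set.ncard_coe_finset]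
  congr 1
  ext S
  simp only [Set.mem_ofPred_eq, mem_coe, mem_rootedSubtrees, descendants_self, subset_univ,
    true_and]
  exact and_congr_right hT.connected_induce_iff

end SimpleGraph

open SimpleGraph

lemma IsRootedBinaryTree.card_children {V : Type*} [Fintype V] {G : SimpleGraph V}
    [DecidableRel G.Adj] {r : V} (h : IsRootedBinaryTree G r) (v : V) :
    #(G.children r v) = 0 ∨ #(G.children r v) = 2 := by
  obtain ⟨hT, hr, hdeg⟩ := h
  by_cases hv : v = r
  · subst hv
    rw [children_self, card_neighborFinset_eq_degree]
    have := G.degree_lt_card_verts v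
    omega
  · have := hT.card_children_add_one hv
    rcases hdeg v hv with h | h <;> omega

/-- For any rooted binary tree `T` on `n` vertices with root `r`, the number of subtrees of
`T` containing `r` satisfies `f_T(r) ≥ 3·2^{(n−1)/2} − 2`, with equality if and only if `T`
is isomorphic to the rooted binary tree `T_{r,2}^n` with exactly two vertices at every
positive level. -/
theorem root_subtrees_lower_bound {V : Type*} [Fintype V] (G : SimpleGraph V)
    [DecidableRel G.Adj] (r : V) (hT : IsRootedBinaryTree G r) :
    3 * 2 ^ ((Fintype.card V - 1) / 2) - 2 ≤ numSubtrees G r ∧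
      (numSubtrees G r = 3 * 2 ^ ((Fintype.card V - 1) / 2) - 2 ↔
        ∀ l : ℕ, 1 ≤ l → l ≤ treeHeight G r →
          (Finset.univ.filter (fun v => G.dist r v = l)).card = 2) := by
  obtain ⟨k, hcard, hle, heq⟩ := hT.1.card_rootedSubtrees_bound hT.card_children r
  rw [descendants_self, card_univ] at hcard
  have hk : (Fintype.card V - 1) / 2 = k := by omega
  have hlevels : G.HasTwoPerLevel r r ↔
      ∀ l, 1 ≤ l → l ≤ treeHeight G r → #{v | G.dist r v = l} = 2 := by
    simp only [HasTwoPerLevel, level, subtreeHeight, treeHeight, descendants_self]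
  rw [hT.1.numSubtrees_eq, hk, ← hlevels, ← heq]
  have := Nat.one_le_two_pow (n := k)
  omega
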